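/- arXiv:1801.08231 — 3 statements merged into one kernel-verified Lean document; each statement's English description precedes it below -/
import Mathlib

section
/- For every set partition A of {1,…,n}, the depth-index equals the crossing-index: t(A) = c(A). -/
open scoped Classical
/-- `(i,j)` is an arc of the set partition `P` of `{1,…,n}` (realized on `Fin n`):
`i < j`, both lie in a common block, and no element of that block is strictly
between `i` and `j`. -/
def IsArc {n : ℕ} (P : Finpartition (Finset.univ : Finset (Fin n))) (i j : Fin n) : Prop :=
  i < j ∧ ∃ b ∈ P.parts, i ∈ b ∧ j ∈ b ∧ ∀ k ∈ b, ¬(i < k ∧ k < j)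

/-- The finite set of arcs of a set partition. -/
noncomputable def arcs {n : ℕ} (P : Finpartition (Finset.univ : Finset (Fin n))) :
    Finset (Fin n × Fin n) :=
  Finset.univ.filter (fun p => IsArc P p.1 p.2)

/-- Depth of a vertex `v`: the number of arcs `(r,s)` with `r < v < s`. -/
noncomputable def depthV {n : ℕ} (P : Finpartition (Finset.univ : Finset (Fin n)))
    (v : Fin n) : ℕ :=
  ((arcs P).filter (fun p => p.1 < v ∧ v < p.2)).card

/-- Depth of an arc `α = (i,j)`: the number of arcs `(r,s)` with `r < i` and `s > j`. -/
noncomputable def depthArc {n : ℕ} (P : Finpartition (Finset.univ : Finset (Fin n)))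
    (α : Fin n × Fin n) : ℕ :=
  ((arcs P).filter (fun p => p.1 < α.1 ∧ α.2 < p.2)).card

/-- Depth of a block `b` (with minimum `i` and maximum `j`): the number of arcs
`(r,s)` with `r < i` and `s > j`; equivalently (for the nonempty blocks of a
partition) the arcs lying strictly above every vertex of `b`. -/
noncomputable def depthBlock {n : ℕ} (P : Finpartition (Finset.univ : Finset (Fin n)))
    (b : Finset (Fin n)) : ℕ :=
  ((arcs P).filter (fun p => ∀ v ∈ b, p.1 < v ∧ v < p.2)).card

/-- Two arcs `(i,j)` and `(r,s)` cross if `i < r < j < s` or `r < i < s < j`. -/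
def ArcCross {n : ℕ} (α β : Fin n × Fin n) : Prop :=
  (α.1 < β.1 ∧ β.1 < α.2 ∧ α.2 < β.2) ∨ (β.1 < α.1 ∧ α.1 < β.2 ∧ β.2 < α.2)

/-- `cross(α)`: the number of blocks of `P` containing at least one arc crossing `α`. -/
noncomputable def crossNum {n : ℕ} (P : Finpartition (Finset.univ : Finset (Fin n)))
    (α : Fin n × Fin n) : ℕ :=
  (P.parts.filter (fun b => ∃ p ∈ arcs P, p.1 ∈ b ∧ p.2 ∈ b ∧ ArcCross α p)).card

/-- The depth-index `t(A) = Σ_{i=1}^{k}(n−i) − Σ_v depth(v) + Σ_α depth(α)`,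
where `k` is the number of arcs. -/
noncomputable def tIdx {n : ℕ} (P : Finpartition (Finset.univ : Finset (Fin n))) : ℤ :=
  (∑ i ∈ Finset.range (arcs P).card, ((n : ℤ) - (i + 1)))
    - (∑ v : Fin n, (depthV P v : ℤ))
    + ∑ α ∈ arcs P, (depthArc P α : ℤ)

/-- The crossing-index `c(A) = Σ_{i=1}^{k}(n−i) − Σ_β depth(β) − Σ_α cross(α)`. -/
noncomputable def cIdx {n : ℕ} (P : Finpartition (Finset.univ : Finset (Fin n))) : ℤ :=
  (∑ i ∈ Finset.range (arcs P).card, ((n : ℤ) - (i + 1)))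
    - (∑ b ∈ P.parts, (depthBlock P b : ℤ))
    - ∑ α ∈ arcs P, (crossNum P α : ℤ)

/-- The rook `φ(A)` associated to a set partition: `φ(A)(j) = i` (in 1-based
values) whenever `(i,j)` is an arc, and `φ(A)(j) = 0` otherwise. Since at most
one arc ends at `j`, the sum below picks out that unique value. -/
noncomputable def phiRook {n : ℕ} (P : Finpartition (Finset.univ : Finset (Fin n))) :
    Fin n → ℕ :=
  fun j => ∑ i : Fin n, if IsArc P i j then i.val + 1 else 0


/-!
Since both indices start from the same sum, the claim is
`Σ_v depth(v) = Σ_α depth(α) + Σ_β depth(β) + Σ_α cross(α)`. Count both sides arc by arc: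
fix an arc `(r,s)` and a block `b` meeting the open interval `(r,s)` in a nonempty set `S`.
The arcs of `b` nested in `(r,s)` join consecutive elements of `S`, so there are `|S| - 1` of
them. Since `r, s ∉ b`, the block `b` either lies inside `(r,s)`, or it has elements on both sides
of `r` (or of `s`) and hence an arc crossing `(r,s)`, and these two cases exclude each other.
So `b` contributes `|S|` to each side.
-/

open Finset

namespace Finpartition

variable {α ι : Type*} [DecidableEq α] {s : Finset α}

lemma card_eq_sum_card_filter_mem (P : Finpartition s) {t : Finset ι} {f : ι → α}
    (hf : ∀ i ∈ t, f i ∈ s) : #t = ∑ b ∈ P.parts, #{i ∈ t | f i ∈ b} := by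
  rw [card_eq_sum_card_fiberwise (f := P.part ∘ f) fun i hi => P.part_mem.2 (hf i hi)]
  refine sum_congr rfl fun b hb => ?_
  simp only [Function.comp_apply, P.part_eq_iff_mem hb]

end Finpartition

section Arcs

variable {n : ℕ} {P : Finpartition (univ : Finset (Fin n))} {b : Finset (Fin n)}
  {i j r s : Fin n}

lemma mem_arcs {p : Fin n × Fin n} : p ∈ arcs P ↔ IsArc P p.1 p.2 := by
  simp [arcs]

lemma isArc_iff_of_mem_left (hb : b ∈ P.parts) (hi : i ∈ b) :
    IsArc P i j ↔ i < j ∧ j ∈ b ∧ ∀ k ∈ b, ¬(i < k ∧ k < j) := by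
  refine ⟨fun ⟨hij, c, hc, hic, hjc, hbetween⟩ => ?_, fun ⟨hij, hj, hbetween⟩ =>
    ⟨hij, b, hb, hi, hj, hbetween⟩⟩
  obtain rfl := P.eq_of_mem_parts hb hc hi hic
  exact ⟨hij, hjc, hbetween⟩

lemma isArc_iff_of_mem_right (hb : b ∈ P.parts) (hj : j ∈ b) :
    IsArc P i j ↔ i < j ∧ i ∈ b ∧ ∀ k ∈ b, ¬(i < k ∧ k < j) := by
  refine ⟨fun ⟨hij, c, hc, hic, hjc, hbetween⟩ => ?_, fun ⟨hij, hi, hbetween⟩ =>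
    ⟨hij, b, hb, hi, hj, hbetween⟩⟩
  obtain rfl := P.eq_of_mem_parts hb hc hj hjc
  exact ⟨hij, hic, hbetween⟩

lemma IsArc.left_unique {i' : Fin n} (h : IsArc P i j) (h' : IsArc P i' j) : i = i' := by
  obtain ⟨hij, c, hc, hic, hjc, hbetween⟩ := h
  obtain ⟨hi'j, hi'c, hbetween'⟩ := (isArc_iff_of_mem_right hc hjc).1 h'
  rcases lt_trichotomy i i' with hlt | heq | hgt
  · exact absurd ⟨hlt, hi'j⟩ (hbetween i' hi'c)
  · exact heq
  · exact absurd ⟨hgt, hij⟩ (hbetween' i hic)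

/-- The arc of `b` running from the last element of `b` below `x` to the first one from `x` on. -/
lemma exists_isArc_straddling (hb : b ∈ P.parts) {u w x : Fin n} (hu : u ∈ b) (hw : w ∈ b)
    (hux : u < x) (hxw : x ≤ w) :
    ∃ i j, IsArc P i j ∧ i ∈ b ∧ j ∈ b ∧ u ≤ i ∧ i < x ∧ x ≤ j ∧ j ≤ w := by
  have hbelow : {k ∈ b | k < x}.Nonempty := ⟨u, mem_filter.2 ⟨hu, hux⟩⟩
  have habove : {k ∈ b | x ≤ k}.Nonempty := ⟨w, mem_filter.2 ⟨hw, hxw⟩⟩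
  obtain ⟨hib, hix⟩ := mem_filter.1 ({k ∈ b | k < x}.max'_mem hbelow)
  obtain ⟨hjb, hxj⟩ := mem_filter.1 ({k ∈ b | x ≤ k}.min'_mem habove)
  refine ⟨_, _, (isArc_iff_of_mem_left hb hib).2 ⟨hix.trans_le hxj, hjb, ?_⟩, hib, hjb,
    le_max' _ _ (mem_filter.2 ⟨hu, hux⟩), hix, hxj, min'_le _ _ (mem_filter.2 ⟨hw, hxw⟩)⟩
  rintro k hk ⟨hik, hkj⟩
  rcases lt_or_ge k x with hkx | hxk
  · exact (le_max' _ k (mem_filter.2 ⟨hk, hkx⟩)).not_gt hik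
  · exact (min'_le _ k (mem_filter.2 ⟨hk, hxk⟩)).not_gt hkj

lemma card_arcs_within_add_one (hb : b ∈ P.parts) (hS : {v ∈ b | r < v ∧ v < s}.Nonempty) :
    #{α ∈ {α ∈ arcs P | r < α.1 ∧ α.2 < s} | α.2 ∈ b} + 1 = #{v ∈ b | r < v ∧ v < s} := by
  set S := {v ∈ b | r < v ∧ v < s}
  obtain ⟨hmb, hrm, -⟩ := mem_filter.1 (S.min'_mem hS)
  rw [← card_erase_add_one (S.min'_mem hS)]
  congr 1
  refine card_bij (fun α _ => α.2) (fun α hα => ?_) (fun α hα α' hα' h => ?_) fun j hj => ?_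
  · simp only [mem_filter, mem_arcs] at hα
    obtain ⟨⟨harc, hrα, hαs⟩, hαb⟩ := hα
    obtain ⟨hlt, hα1b, -⟩ := (isArc_iff_of_mem_right hb hαb).1 harc
    have hα1 : α.1 ∈ S := mem_filter.2 ⟨hα1b, hrα, hlt.trans hαs⟩
    exact mem_erase.2 ⟨fun h => (S.min'_le _ hα1).not_gt (h ▸ hlt),
      mem_filter.2 ⟨hαb, hrα.trans hlt, hαs⟩⟩
  · simp only [mem_filter, mem_arcs] at hα hα'
    exact Prod.ext (hα.1.1.left_unique (h ▸ hα'.1.1)) h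
  · obtain ⟨hjm, hjS⟩ := mem_erase.1 hj
    obtain ⟨hjb, -, hjs⟩ := mem_filter.1 hjS
    obtain ⟨i, j', harc, -, hj'b, hmi, hij, hjj', hj'j⟩ := exists_isArc_straddling hb hmb hjb
      ((S.min'_le _ hjS).lt_of_ne (Ne.symm hjm)) le_rfl
    obtain rfl := le_antisymm hj'j hjj'
    exact ⟨(i, j'), by simp [mem_arcs, harc, hrm.trans_le hmi, hjs, hj'b], rfl⟩

lemma nested_iff_not_crosses (hβ : IsArc P r s) (hb : b ∈ P.parts)
    (hS : {v ∈ b | r < v ∧ v < s}.Nonempty) :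
    (∀ v ∈ b, r < v ∧ v < s) ↔ ¬∃ p ∈ arcs P, p.1 ∈ b ∧ p.2 ∈ b ∧ ArcCross (r, s) p := by
  obtain ⟨v, hv⟩ := hS
  obtain ⟨hvb, hrv, hvs⟩ := mem_filter.1 hv
  have hr : r ∉ b := fun hrb => ((isArc_iff_of_mem_left hb hrb).1 hβ).2.2 v hvb ⟨hrv, hvs⟩
  have hs : s ∉ b := fun hsb => ((isArc_iff_of_mem_right hb hsb).1 hβ).2.2 v hvb ⟨hrv, hvs⟩
  refine ⟨?_, fun hno => ?_⟩
  · rintro hin ⟨p, -, hp1, hp2, ⟨-, -, hsp⟩ | ⟨hpr, -, -⟩⟩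
    · exact lt_asymm (hin p.2 hp2).2 hsp
    · exact lt_asymm (hin p.1 hp1).1 hpr
  by_contra hout
  obtain ⟨w, hwb, hw⟩ := not_forall₂.1 hout
  rcases lt_or_ge w r with hwr | hrw
  · obtain ⟨i, j, harc, hib, hjb, -, hir, hrj, hjv⟩ :=
      exists_isArc_straddling hb hwb hvb hwr hrv.le
    exact hno ⟨(i, j), mem_arcs.2 harc, hib, hjb,
      Or.inr ⟨hir, hrj.lt_of_ne (ne_of_mem_of_not_mem hjb hr).symm, hjv.trans_lt hvs⟩⟩
  · have hsw : s < w := by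
      by_contra! hws
      exact hw ⟨hrw.lt_of_ne (ne_of_mem_of_not_mem hwb hr).symm,
        hws.lt_of_ne (ne_of_mem_of_not_mem hwb hs)⟩
    obtain ⟨i, j, harc, hib, hjb, hvi, his, hsj, -⟩ :=
      exists_isArc_straddling hb hvb hwb hvs hsw.le
    exact hno ⟨(i, j), mem_arcs.2 harc, hib, hjb,
      Or.inl ⟨hrv.trans_le hvi, his, hsj.lt_of_ne (ne_of_mem_of_not_mem hjb hs).symm⟩⟩

lemma card_arcs_within_add_nested_add_crosses (hβ : IsArc P r s) (hb : b ∈ P.parts) :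
    #{α ∈ {α ∈ arcs P | r < α.1 ∧ α.2 < s} | α.2 ∈ b}
      + (if ∀ v ∈ b, r < v ∧ v < s then 1 else 0)
      + (if ∃ p ∈ arcs P, p.1 ∈ b ∧ p.2 ∈ b ∧ ArcCross (r, s) p then 1 else 0)
      = #{v ∈ b | r < v ∧ v < s} := by
  by_cases hS : {v ∈ b | r < v ∧ v < s}.Nonempty
  · rw [← card_arcs_within_add_one hb hS, add_assoc]
    by_cases hcross : ∃ p ∈ arcs P, p.1 ∈ b ∧ p.2 ∈ b ∧ ArcCross (r, s) p <;>
      simp [nested_iff_not_crosses hβ hb hS, hcross]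
  have hout : ∀ v ∈ b, ¬(r < v ∧ v < s) := fun v hvb hv => hS ⟨v, mem_filter.2 ⟨hvb, hv⟩⟩
  obtain ⟨v, hvb⟩ := P.nonempty_of_mem_parts hb
  have hwithin : {α ∈ {α ∈ arcs P | r < α.1 ∧ α.2 < s} | α.2 ∈ b} = ∅ := by
    refine filter_eq_empty_iff.2 fun α hα hαb => ?_
    obtain ⟨harc, hrα, hαs⟩ := mem_filter.1 hα
    exact hout α.2 hαb ⟨hrα.trans (mem_arcs.1 harc).1, hαs⟩
  have hcross : ¬∃ p ∈ arcs P, p.1 ∈ b ∧ p.2 ∈ b ∧ ArcCross (r, s) p := by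
    rintro ⟨p, -, hp1, hp2, ⟨hrp, hps, -⟩ | ⟨-, hrp, hps⟩⟩
    exacts [hout p.1 hp1 ⟨hrp, hps⟩, hout p.2 hp2 ⟨hrp, hps⟩]
  rw [not_nonempty_iff_eq_empty.1 hS, hwithin, if_neg fun h => hout v hvb (h v hvb),
    if_neg hcross]
  rfl

lemma sum_depthArc_add_sum_depthBlock_add_sum_crossNum
    (P : Finpartition (univ : Finset (Fin n))) :
    ∑ α ∈ arcs P, depthArc P α + ∑ b ∈ P.parts, depthBlock P b + ∑ α ∈ arcs P, crossNum P α
      = ∑ v, depthV P v := by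
  have hdepthV : ∑ v, depthV P v
      = ∑ β ∈ arcs P, ∑ b ∈ P.parts, #{v ∈ b | β.1 < v ∧ v < β.2} := by
    conv_lhs => simp only [depthV, card_filter]
    rw [sum_comm]
    refine sum_congr rfl fun β _ => ?_
    rw [← card_filter, P.card_eq_sum_card_filter_mem fun v _ => mem_univ v]
    refine sum_congr rfl fun b _ => congrArg card ?_
    ext v
    simp [and_comm]
  have hdepthArc : ∑ α ∈ arcs P, depthArc P α
      = ∑ β ∈ arcs P, ∑ b ∈ P.parts, #{α ∈ {α ∈ arcs P | β.1 < α.1 ∧ α.2 < β.2} | α.2 ∈ b} := by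
    conv_lhs => simp only [depthArc, card_filter]
    rw [sum_comm]
    refine sum_congr rfl fun β _ => ?_
    rw [← card_filter, P.card_eq_sum_card_filter_mem fun α _ => mem_univ α.2]
  have hdepthBlock : ∑ b ∈ P.parts, depthBlock P b
      = ∑ β ∈ arcs P, ∑ b ∈ P.parts, if ∀ v ∈ b, β.1 < v ∧ v < β.2 then 1 else 0 := by
    conv_lhs => simp only [depthBlock, card_filter]
    exact sum_comm
  have hcrossNum : ∑ α ∈ arcs P, crossNum P α = ∑ β ∈ arcs P, ∑ b ∈ P.parts,
      if ∃ p ∈ arcs P, p.1 ∈ b ∧ p.2 ∈ b ∧ ArcCross β p then 1 else 0 := by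
    simp only [crossNum, card_filter]
  rw [hdepthV, hdepthArc, hdepthBlock, hcrossNum, ← sum_add_distrib, ← sum_add_distrib]
  refine sum_congr rfl fun ⟨r, s⟩ hβ => ?_
  rw [← sum_add_distrib, ← sum_add_distrib]
  exact sum_congr rfl fun b hb => card_arcs_within_add_nested_add_crosses (mem_arcs.1 hβ) hb

end Arcs

/-- for every set partition `A` of `{1,…,n}`, the depth-index
equals the crossing-index: `t(A) = c(A)`. -/
theorem stmt4 (n : ℕ) (P : Finpartition (Finset.univ : Finset (Fin n))) :
    tIdx P = cIdx P := by
  have key := congrArg (Nat.cast : ℕ → ℤ) (sum_depthArc_add_sum_depthBlock_add_sum_crossNum P)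
  push_cast at key
  unfold tIdx cIdx
  linarith
end

section
/- For every n ≥ 1, the map ψ sending x to the set of its fixed points ψ(x) = {i ∈ {1,…,n} : x(i) = i} is an order isomorphism from the poset P_{n,n−1} (upper triangular n-rooks of rank n−1 under the Bruhat–Chevalley–Renner order) onto the poset of all subsets of {1,…,n} other than the full set {1,…,n}, ordered by inclusion; that is, ψ is a bijection onto the proper subsets and, for x, y ∈ P_{n,n−1}, x ≤ y if and only if ψ(x) ⊆ ψ(y). -/
open scoped Classical

/-- An `n`-rook in one-line notation: a function `a : Fin n → ℕ` (position `i`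
represents position `i+1` in 1-based notation) with values in `{0,…,n}`, whose
nonzero values are pairwise distinct. `a i = 0` means position `i` is vacant. -/
def IsRook (n : ℕ) (a : Fin n → ℕ) : Prop :=
  (∀ i, a i ≤ n) ∧ ∀ i j, a i ≠ 0 → a i = a j → i = j

/-- The rank of a rook: the number of nonzero entries. -/
def rookRank (n : ℕ) (a : Fin n → ℕ) : ℕ :=
  (Finset.univ.filter (fun i => a i ≠ 0)).card

/-- `inv(a) = #{(i,j) : i < j ∧ a i > a j}`. -/
def rookInv (n : ℕ) (a : Fin n → ℕ) : ℕ :=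
  (Finset.univ.filter (fun p : Fin n × Fin n => p.1 < p.2 ∧ a p.2 < a p.1)).card

/-- `coinv(a) = #{(i,j) : i < j ∧ 0 < a i < a j}`. -/
def rookCoinv (n : ℕ) (a : Fin n → ℕ) : ℕ :=
  (Finset.univ.filter (fun p : Fin n × Fin n => p.1 < p.2 ∧ 0 < a p.1 ∧ a p.1 < a p.2)).card

/-- The length `ℓ(a) = Σ a i + inv(a)`. -/
def rookLen (n : ℕ) (a : Fin n → ℕ) : ℕ :=
  (∑ i, a i) + rookInv n a
/-- The generating relations of the Bruhat–Chevalley–Renner order on `n`-rooks. -/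
def BCRStep (n : ℕ) (a b : Fin n → ℕ) : Prop :=
  IsRook n a ∧ IsRook n b ∧
  ((∃ i, a i < b i ∧ ∀ j, j ≠ i → a j = b j) ∨
   (∃ i j : Fin n, i < j ∧ b i = a j ∧ b j = a i ∧ b j < b i ∧
      ∀ m, m ≠ i → m ≠ j → a m = b m))

/-- The Bruhat–Chevalley–Renner order: the partial order on `n`-rooks generated by
the relations `BCRStep`. -/
def BCRle (n : ℕ) : (Fin n → ℕ) → (Fin n → ℕ) → Prop :=
  Relation.ReflTransGen (BCRStep n)

/-- The fixed-point set `ψ(x) = {i : x(i) = i}` (0-based: `x i = i + 1`). -/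
def psiFix (n : ℕ) (x : Fin n → ℕ) : Finset (Fin n) :=
  Finset.univ.filter (fun i => x i = i.val + 1)

/-!
On `P_{n,n-1}` a rook is determined by its set `T` of non-fixed positions. Indeed, on `T` it is
an injection into `T` that strictly decreases positions except at the unique vacant position,
and a pigeonhole count shows that such a map must send every element of `T` to its predecessor
in `T`, leaving the minimum of `T` vacant. Conversely, every nonempty `T` gives such a rook
`chainRook T`. For `s ∈ T`, passing from `chainRook T` to `chainRook (T.erase s)` is a single
generating relation: a swap of `s` with its successor in `T`, or a raise at `s = max T`. Hence
inclusion of fixed-point sets implies the order. The converse holds because every generating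
relation can only increase the counts `#{k ≤ i | j ≤ a k}`, and for an upper triangular `y` the
count with `j = i + 1` is positive exactly when `y i = i + 1`.
-/

open Finset

section DecreasingInjection

variable {α : Type*} [LinearOrder α] {T : Finset α} {v : α} {f : α → α}

theorem le_of_mapsTo_lt_on_erase (hv : v ∈ T) (hf : ∀ i ∈ T.erase v, f i ∈ T ∧ f i < i) :
    ∀ t ∈ T, v ≤ t := by
  have hmin : T.min' ⟨v, hv⟩ = v := by
    by_contra hne
    have hmem := mem_erase.mpr ⟨hne, T.min'_mem ⟨v, hv⟩⟩
    exact (hf _ hmem).2.not_ge (T.min'_le _ (hf _ hmem).1)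
  exact fun t ht => hmin ▸ T.min'_le t ht

theorem image_filter_le_of_mapsTo_lt_on_erase (hv : v ∈ T)
    (hf : ∀ i ∈ T.erase v, f i ∈ T ∧ f i < i) (hinj : Set.InjOn f (T.erase v)) {t : α}
    (ht : t ∈ T) : ((T.erase v).filter (· ≤ t)).image f = T.filter (· < t) := by
  have hsub : ((T.erase v).filter (· ≤ t)).image f ⊆ T.filter (· < t) := by
    simp only [subset_iff, mem_image, mem_filter]
    rintro _ ⟨a, ⟨ha, hat⟩, rfl⟩
    exact ⟨(hf a ha).1, (hf a ha).2.trans_le hat⟩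
  refine eq_of_subset_of_card_le hsub ?_
  have hvt : v ∈ T.filter (· ≤ t) :=
    mem_filter.mpr ⟨hv, le_of_mapsTo_lt_on_erase hv hf t ht⟩
  have htt : t ∈ T.filter (· ≤ t) := mem_filter.mpr ⟨ht, le_rfl⟩
  have hlt : T.filter (· < t) = (T.filter (· ≤ t)).erase t := by
    ext u; simp only [mem_filter, mem_erase, lt_iff_le_and_ne]; tauto
  rw [card_image_of_injOn (hinj.mono (filter_subset _ _)), filter_erase, hlt,
    card_erase_of_mem hvt, card_erase_of_mem htt]

/-- A strictly decreasing injection of `T \ {v}` into `T` maps each element to its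
predecessor in `T`. -/
theorem le_apply_of_mapsTo_lt_on_erase (hv : v ∈ T)
    (hf : ∀ i ∈ T.erase v, f i ∈ T ∧ f i < i) (hinj : Set.InjOn f (T.erase v)) {i t : α}
    (hi : i ∈ T.erase v) (ht : t ∈ T) (hti : t < i) : t ≤ f i := by
  by_contra! hlt
  have hfi : f i ∈ T.filter (· < t) := mem_filter.mpr ⟨(hf i hi).1, hlt⟩
  rw [← image_filter_le_of_mapsTo_lt_on_erase hv hf hinj ht] at hfi
  obtain ⟨a, ha, hfa⟩ := mem_image.mp hfi
  have ha' := mem_filter.mp ha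
  exact (hinj ha'.1 hi hfa ▸ ha'.2).not_gt hti

end DecreasingInjection

namespace Rook

variable {n : ℕ}

theorem mem_psiFix {x : Fin n → ℕ} {i : Fin n} : i ∈ psiFix n x ↔ x i = i.val + 1 := by
  simp [psiFix]

/-- The label `p + 1` of the predecessor `p` of `i` in `T`, or `0` if there is none. -/
noncomputable def predLabel (T : Finset (Fin n)) (i : Fin n) : ℕ :=
  (T.filter (· < i)).sup fun t => t.val + 1

/-- The rook fixing every position outside `T` and mapping each element of `T` to its
predecessor in `T`, leaving the minimum of `T` vacant. -/
noncomputable def chainRook (T : Finset (Fin n)) (i : Fin n) : ℕ :=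
  if i ∈ T then predLabel T i else i.val + 1

variable {T : Finset (Fin n)} {i j p s m : Fin n}

theorem predLabel_le_val : predLabel T i ≤ i.val :=
  Finset.sup_le fun _ ht => (mem_filter.mp ht).2

theorem predLabel_pos (hp : p ∈ T) (hpi : p < i) : 0 < predLabel T i :=
  Nat.succ_pos p.val |>.trans_le <|
    Finset.le_sup (f := fun t : Fin n => t.val + 1) (mem_filter.mpr ⟨hp, hpi⟩)

theorem predLabel_eq (hp : p ∈ T) (hpi : p < i) (hmax : ∀ u ∈ T, u < i → u ≤ p) :
    predLabel T i = p.val + 1 :=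
  le_antisymm
    (Finset.sup_le fun t ht =>
      Nat.succ_le_succ (hmax t (mem_filter.mp ht).1 (mem_filter.mp ht).2))
    (Finset.le_sup (f := fun t : Fin n => t.val + 1) (mem_filter.mpr ⟨hp, hpi⟩))

theorem predLabel_eq_zero (h : ∀ u ∈ T, ¬u < i) : predLabel T i = 0 :=
  Nat.le_zero.mp <| Finset.sup_le fun t ht =>
    absurd (mem_filter.mp ht).2 (h t (mem_filter.mp ht).1)

theorem exists_predLabel_eq (hne : predLabel T i ≠ 0) :
    ∃ p ∈ T, p < i ∧ predLabel T i = p.val + 1 ∧ ∀ u ∈ T, u < i → u ≤ p := by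
  have hfne : (T.filter (· < i)).Nonempty := by
    by_contra h
    rw [not_nonempty_iff_eq_empty] at h
    exact hne (by rw [predLabel, h, sup_empty]; rfl)
  obtain ⟨hpT, hpi⟩ := mem_filter.mp (max'_mem _ hfne)
  have hmax : ∀ u ∈ T, u < i → u ≤ (T.filter (· < i)).max' hfne :=
    fun u hu hui => le_max' _ u (mem_filter.mpr ⟨hu, hui⟩)
  exact ⟨_, hpT, hpi, predLabel_eq hpT hpi hmax, hmax⟩

theorem predLabel_erase_of_not_lt (h : ¬s < m) : predLabel (T.erase s) m = predLabel T m := by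
  rw [predLabel, predLabel, filter_erase, erase_eq_of_notMem]
  simp only [mem_filter, not_and]
  exact fun _ => h

theorem predLabel_erase_of_lt (hj : j ∈ T) (hsj : s < j) (hjm : j < m) :
    predLabel (T.erase s) m = predLabel T m := by
  refine le_antisymm (sup_mono (filter_subset_filter _ (erase_subset s T)))
    (Finset.sup_le fun t ht => ?_)
  obtain ⟨htT, htm⟩ := mem_filter.mp ht
  have hle : ∀ u ∈ T.erase s, u < m → u.val + 1 ≤ predLabel (T.erase s) m :=
    fun u hu hum => le_sup (f := fun t : Fin n => t.val + 1) (mem_filter.mpr ⟨hu, hum⟩)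
  rcases eq_or_ne t s with rfl | hts
  · exact (Nat.succ_le_succ hsj.le).trans (hle j (mem_erase.mpr ⟨hsj.ne', hj⟩) hjm)
  · exact hle t (mem_erase.mpr ⟨hts, htT⟩) htm

theorem predLabel_erase_of_succ (hsj : s < j) (hmin : ∀ u ∈ T, s < u → j ≤ u) :
    predLabel (T.erase s) j = predLabel T s := by
  rw [predLabel, predLabel]
  congr 1
  ext u
  simp only [mem_filter, mem_erase]
  constructor
  · rintro ⟨⟨hus, huT⟩, huj⟩
    exact ⟨huT, (lt_or_gt_of_ne hus).resolve_right fun h => (hmin u huT h).not_gt huj⟩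
  · rintro ⟨huT, hus⟩
    exact ⟨⟨hus.ne, huT⟩, hus.trans hsj⟩

theorem chainRook_of_notMem (h : i ∉ T) : chainRook T i = i.val + 1 := if_neg h

theorem chainRook_of_mem (h : i ∈ T) : chainRook T i = predLabel T i := if_pos h

theorem chainRook_le (T : Finset (Fin n)) (i : Fin n) : chainRook T i ≤ i.val + 1 := by
  unfold chainRook
  split_ifs
  exacts [predLabel_le_val.trans (Nat.le_succ _), le_rfl]

theorem isRook_chainRook (T : Finset (Fin n)) : IsRook n (chainRook T) := by
  refine ⟨fun i => (chainRook_le T i).trans i.isLt, fun i j hne heq => ?_⟩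
  by_cases hi : i ∈ T <;> by_cases hj : j ∈ T
  · rw [chainRook_of_mem hi] at hne heq
    rw [chainRook_of_mem hj] at heq
    obtain ⟨p, -, hpi, hpe, hpmax⟩ := exists_predLabel_eq hne
    obtain ⟨q, -, hqj, hqe, hqmax⟩ := exists_predLabel_eq (heq ▸ hne)
    have hpq : p = q := Fin.ext (by omega)
    subst hpq
    rcases lt_trichotomy i j with h | h | h
    · exact absurd (hqmax i hi h) (not_le.mpr hpi)
    · exact h
    · exact absurd (hpmax j hj h) (not_le.mpr hqj)
  · rw [chainRook_of_mem hi] at hne heq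
    rw [chainRook_of_notMem hj] at heq
    obtain ⟨p, hpT, -, hpe, -⟩ := exists_predLabel_eq hne
    exact absurd ((Fin.ext (by omega) : p = j) ▸ hpT) hj
  · rw [chainRook_of_notMem hi, chainRook_of_mem hj] at heq
    obtain ⟨q, hqT, -, hqe, -⟩ := exists_predLabel_eq (by omega : predLabel T j ≠ 0)
    exact absurd ((Fin.ext (by omega) : i = q) ▸ hqT) hi
  · rw [chainRook_of_notMem hi, chainRook_of_notMem hj] at heq
    exact Fin.ext (by omega)

theorem rookRank_chainRook (hT : T.Nonempty) : rookRank n (chainRook T) = n - 1 := by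
  have hmin := T.min'_mem hT
  have hvacant : chainRook T (T.min' hT) = 0 := by
    rw [chainRook_of_mem hmin]
    exact predLabel_eq_zero fun u hu => not_lt.mpr (T.min'_le u hu)
  have hsupp : univ.filter (fun i => chainRook T i ≠ 0) = univ.erase (T.min' hT) := by
    ext i
    simp only [mem_filter, mem_univ, true_and, mem_erase, and_true]
    constructor
    · rintro h rfl
      exact h hvacant
    · intro h
      by_cases hiT : i ∈ T
      · rw [chainRook_of_mem hiT]
        exact (predLabel_pos hmin (lt_of_le_of_ne (T.min'_le i hiT) (Ne.symm h))).ne'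
      · rw [chainRook_of_notMem hiT]; omega
  rw [rookRank, hsupp, card_erase_of_mem (mem_univ _), card_univ, Fintype.card_fin]

theorem psiFix_chainRook (T : Finset (Fin n)) : psiFix n (chainRook T) = Tᶜ := by
  ext i
  rw [mem_psiFix, mem_compl]
  by_cases hiT : i ∈ T
  · have := predLabel_le_val (T := T) (i := i)
    simp only [chainRook_of_mem hiT, hiT, not_true_eq_false, iff_false]
    omega
  · simp [chainRook_of_notMem hiT, hiT]

theorem psiFix_ne_univ (hn : 1 ≤ n) {x : Fin n → ℕ} (hrk : rookRank n x = n - 1) :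
    psiFix n x ≠ univ := by
  intro h
  have hsupp : univ.filter (fun i => x i ≠ 0) = univ := by
    ext i
    simp [mem_psiFix.mp (h ▸ mem_univ i)]
  rw [rookRank, hsupp, card_univ, Fintype.card_fin] at hrk
  omega

theorem exists_eq_zero_iff_of_rookRank (hn : 0 < n) {x : Fin n → ℕ}
    (hrk : rookRank n x = n - 1) : ∃ v, ∀ i, x i = 0 ↔ i = v := by
  have hcard : #(univ.filter fun i => x i = 0) = 1 := by
    have := card_filter_add_card_filter_not (s := univ) (p := fun i : Fin n => x i = 0)
    rw [card_univ, Fintype.card_fin] at this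
    rw [rookRank] at hrk
    simp only [ne_eq] at hrk
    omega
  obtain ⟨v, hv⟩ := card_eq_one.mp hcard
  exact ⟨v, fun i => by simpa using Finset.ext_iff.mp hv i⟩

theorem eq_chainRook {x : Fin n → ℕ} (hx : IsRook n x) (hup : ∀ i, x i ≤ i.val + 1)
    (hrk : rookRank n x = n - 1) : x = chainRook (psiFix n x)ᶜ := by
  obtain rfl | hn := n.eq_zero_or_pos
  · exact funext fun i => i.elim0
  set T := (psiFix n x)ᶜ
  have hmemT : ∀ i, i ∈ T ↔ x i ≠ i.val + 1 := fun i => by simp [T, mem_psiFix]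
  obtain ⟨v, hv⟩ := exists_eq_zero_iff_of_rookRank hn hrk
  have hvT : v ∈ T := (hmemT v).mpr (by rw [(hv v).mpr rfl]; omega)
  -- `f i` is the position whose label `f i + 1` is the value `x i`
  let f : Fin n → Fin n := fun i => ⟨x i - 1, by have := hx.1 i; have := i.isLt; omega⟩
  have hxf : ∀ i ∈ T.erase v, x i = (f i).val + 1 := fun i hi => by
    have := (hv i).not.mpr (mem_erase.mp hi).1
    simp only [f]
    omega
  have hf : ∀ i ∈ T.erase v, f i ∈ T ∧ f i < i := by
    intro i hi
    have hxi := hxf i hi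
    have hlt : x i ≤ i.val := by have := (hmemT i).mp (mem_of_mem_erase hi); have := hup i; omega
    refine ⟨(hmemT _).mpr fun hfix => ?_, Fin.lt_def.mpr (by omega)⟩
    have := hx.2 _ _ (by omega) (hfix.trans hxi.symm)
    rw [this] at hxi
    omega
  have hinj : Set.InjOn f (T.erase v) := fun a ha b hb hab => by
    have hxa := hxf a ha
    exact hx.2 a b (by omega) (by rw [hxa, hxf b hb, hab])
  funext i
  by_cases hiT : i ∈ T
  · rw [chainRook_of_mem hiT]
    by_cases hiv : i = v
    · subst hiv
      rw [(hv i).mpr rfl,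
        predLabel_eq_zero fun u hu => not_lt.mpr (le_of_mapsTo_lt_on_erase hvT hf u hu)]
    · have hiE : i ∈ T.erase v := mem_erase.mpr ⟨hiv, hiT⟩
      rw [hxf i hiE, predLabel_eq (hf i hiE).1 (hf i hiE).2
        fun u hu hui => le_apply_of_mapsTo_lt_on_erase hvT hf hinj hiE hu hui]
  · rw [chainRook_of_notMem hiT]
    simpa [hmemT] using hiT

theorem chainRook_erase_of_ne (hm : m ≠ s)
    (hbetween : s < m → m ∈ T → ∃ j ∈ T, s < j ∧ j < m) :
    chainRook (T.erase s) m = chainRook T m := by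
  by_cases hmT : m ∈ T
  · rw [chainRook_of_mem hmT, chainRook_of_mem (mem_erase.mpr ⟨hm, hmT⟩)]
    by_cases hsm : s < m
    · obtain ⟨j, hj, hsj, hjm⟩ := hbetween hsm hmT
      exact predLabel_erase_of_lt hj hsj hjm
    · exact predLabel_erase_of_not_lt hsm
  · rw [chainRook_of_notMem hmT, chainRook_of_notMem fun h => hmT (mem_of_mem_erase h)]

theorem bcrStep_chainRook_erase (hs : s ∈ T) :
    BCRStep n (chainRook T) (chainRook (T.erase s)) := by
  refine ⟨isRook_chainRook T, isRook_chainRook _, ?_⟩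
  have hbs : chainRook (T.erase s) s = s.val + 1 := chainRook_of_notMem (notMem_erase s T)
  have has : chainRook T s ≤ s.val := by rw [chainRook_of_mem hs]; exact predLabel_le_val
  by_cases hU : (T.filter (s < ·)).Nonempty
  · right
    obtain ⟨hjT, hsj⟩ := mem_filter.mp (min'_mem _ hU)
    set j := (T.filter (s < ·)).min' hU
    have hmin : ∀ u ∈ T, s < u → j ≤ u :=
      fun u hu hsu => min'_le _ u (mem_filter.mpr ⟨hu, hsu⟩)
    have haj : chainRook T j = s.val + 1 := by
      rw [chainRook_of_mem hjT]
      exact predLabel_eq hs hsj fun u hu huj => not_lt.mp fun h => (hmin u hu h).not_gt huj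
    have hbj : chainRook (T.erase s) j = chainRook T s := by
      rw [chainRook_of_mem (mem_erase.mpr ⟨hsj.ne', hjT⟩), chainRook_of_mem hs]
      exact predLabel_erase_of_succ hsj hmin
    refine ⟨s, j, hsj, hbs.trans haj.symm, hbj, by omega, fun m hms hmj => ?_⟩
    exact (chainRook_erase_of_ne hms fun hsm hmT =>
      ⟨j, hjT, hsj, lt_of_le_of_ne (hmin m hmT hsm) (Ne.symm hmj)⟩).symm
  · left
    refine ⟨s, by omega, fun m hms => (chainRook_erase_of_ne hms fun hsm hmT => ?_).symm⟩
    exact absurd ⟨m, mem_filter.mpr ⟨hmT, hsm⟩⟩ hU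

theorem bcrLe_chainRook_of_subset {S T : Finset (Fin n)} (h : S ⊆ T) :
    BCRle n (chainRook T) (chainRook S) := by
  induction T using Finset.strongInduction with
  | H T ih =>
    obtain rfl | hss := eq_or_ssubset_of_subset h
    · exact Relation.ReflTransGen.refl
    · obtain ⟨t, htT, htS⟩ := exists_of_ssubset hss
      exact .head (bcrStep_chainRook_erase htT)
        (ih _ (erase_ssubset htT) (subset_erase.mpr ⟨h, htS⟩))

noncomputable def cornerCount (a : Fin n → ℕ) (i : Fin n) (j : ℕ) : ℕ :=
  #(univ.filter fun k => k ≤ i ∧ j ≤ a k)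

variable {a b : Fin n → ℕ}

theorem cornerCount_le_of_le (h : ∀ k ≤ i, a k ≤ b k) (j : ℕ) :
    cornerCount a i j ≤ cornerCount b i j :=
  card_le_card fun k hk => by
    simp only [mem_filter, mem_univ, true_and] at hk ⊢
    exact ⟨hk.1, hk.2.trans (h k hk.1)⟩

theorem cornerCount_comp_le (σ : Equiv.Perm (Fin n)) (hσ : ∀ k ≤ i, σ k ≤ i) (j : ℕ) :
    cornerCount (b ∘ σ) i j ≤ cornerCount b i j :=
  card_le_card_of_injOn σ (fun k hk => by
    simp only [coe_filter, mem_univ, true_and, Set.mem_ofPred_eq, Function.comp_apply] at hk ⊢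
    exact ⟨hσ k hk.1, hk.2⟩) σ.injective.injOn

theorem cornerCount_le_of_bcrStep (h : BCRStep n a b) (i : Fin n) (j : ℕ) :
    cornerCount a i j ≤ cornerCount b i j := by
  obtain ⟨-, -, ⟨i₀, hlt, heq⟩ | ⟨i₀, j₀, hij, hb₁, hb₂, hbb, heq⟩⟩ := h
  · refine cornerCount_le_of_le (fun k _ => ?_) j
    rcases eq_or_ne k i₀ with rfl | hk
    exacts [hlt.le, (heq k hk).le]
  rcases le_or_gt j₀ i with hj₀ | hj₀
  · have hab : a = b ∘ Equiv.swap i₀ j₀ := by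
      funext k
      rcases eq_or_ne k i₀ with rfl | hki
      · simp only [Function.comp_apply, Equiv.swap_apply_left]; exact hb₂.symm
      rcases eq_or_ne k j₀ with rfl | hkj
      · simp only [Function.comp_apply, Equiv.swap_apply_right]; exact hb₁.symm
      simp [Equiv.swap_apply_of_ne_of_ne hki hkj, heq k hki hkj]
    rw [hab]
    refine cornerCount_comp_le _ (fun k hk => ?_) j
    rw [Equiv.swap_apply_def]
    split_ifs
    exacts [hj₀, hij.le.trans hj₀, hk]
  · refine cornerCount_le_of_le (fun k hk => ?_) j
    rcases eq_or_ne k i₀ with rfl | hki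
    · exact hb₂ ▸ hbb.le
    · exact (heq k hki (hk.trans_lt hj₀).ne).le

theorem cornerCount_le_of_bcrLe (h : BCRle n a b) (i : Fin n) (j : ℕ) :
    cornerCount a i j ≤ cornerCount b i j := by
  induction h with
  | refl => exact le_rfl
  | tail _ hstep ih => exact ih.trans (cornerCount_le_of_bcrStep hstep i j)

theorem eq_of_cornerCount_pos (hb : ∀ k, b k ≤ k.val + 1)
    (h : 0 < cornerCount b i (i.val + 1)) :
    b i = i.val + 1 := by
  obtain ⟨k, hk⟩ := card_pos.mp h
  obtain ⟨-, hki, hbk⟩ := mem_filter.mp hk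
  obtain rfl : k = i := le_antisymm hki (Fin.le_def.mpr (by have := hb k; omega))
  exact le_antisymm (hb k) hbk

theorem psiFix_subset_of_bcrLe (h : BCRle n a b) (hb : ∀ k, b k ≤ k.val + 1) :
    psiFix n a ⊆ psiFix n b := by
  intro i hi
  have ha : 0 < cornerCount a i (i.val + 1) :=
    card_pos.mpr ⟨i, mem_filter.mpr ⟨mem_univ _, le_rfl, (mem_psiFix.mp hi).ge⟩⟩
  exact mem_psiFix.mpr (eq_of_cornerCount_pos hb (ha.trans_le (cornerCount_le_of_bcrLe h i _)))

end Rook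

open Rook in
/-- for `n ≥ 1`, `ψ` is an order isomorphism from `P_{n,n−1}`
(upper triangular `n`-rooks of rank `n−1` under the Bruhat–Chevalley–Renner
order) onto the proper subsets of `{1,…,n}` ordered by inclusion. -/
theorem stmt11 (n : ℕ) (hn : 1 ≤ n) :
    (∀ x : Fin n → ℕ, IsRook n x → (∀ i : Fin n, x i ≤ i.val + 1) →
        rookRank n x = n - 1 → psiFix n x ≠ Finset.univ) ∧
    (∀ x y : Fin n → ℕ,
        IsRook n x → (∀ i : Fin n, x i ≤ i.val + 1) → rookRank n x = n - 1 →
        IsRook n y → (∀ i : Fin n, y i ≤ i.val + 1) → rookRank n y = n - 1 →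
        psiFix n x = psiFix n y → x = y) ∧
    (∀ s : Finset (Fin n), s ≠ Finset.univ →
        ∃ x : Fin n → ℕ, IsRook n x ∧ (∀ i : Fin n, x i ≤ i.val + 1) ∧
          rookRank n x = n - 1 ∧ psiFix n x = s) ∧
    (∀ x y : Fin n → ℕ,
        IsRook n x → (∀ i : Fin n, x i ≤ i.val + 1) → rookRank n x = n - 1 →
        IsRook n y → (∀ i : Fin n, y i ≤ i.val + 1) → rookRank n y = n - 1 →
        (BCRle n x y ↔ psiFix n x ⊆ psiFix n y)) := by
  refine ⟨fun x _ _ hrk => psiFix_ne_univ hn hrk, ?_, ?_, ?_⟩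
  · intro x y hx hupx hrkx hy hupy hrky hxy
    rw [eq_chainRook hx hupx hrkx, eq_chainRook hy hupy hrky, hxy]
  · intro s hs
    have hne : sᶜ.Nonempty := (compl_ne_univ_iff_nonempty sᶜ).mp (by rwa [compl_compl])
    exact ⟨chainRook sᶜ, isRook_chainRook _, chainRook_le _, rookRank_chainRook hne,
      by rw [psiFix_chainRook, compl_compl]⟩
  · intro x y hx hupx hrkx hy hupy hrky
    refine ⟨fun h => psiFix_subset_of_bcrLe h hupy, fun h => ?_⟩
    rw [eq_chainRook hx hupx hrkx, eq_chainRook hy hupy hrky]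
    exact bcrLe_chainRook_of_subset (compl_subset_compl.mpr h)
end

section
/- Let w₀ be the n-rook with w₀(i) = n+1−i for all i. Then for every 2n-rook x, x ≤ ι(w₀) in the Bruhat–Chevalley–Renner order on 2n-rooks if and only if x = ι(σ) for some n-rook σ; consequently the lower interval [0, ι(w₀)] in the poset of 2n-rooks is order-isomorphic to the poset of all n-rooks under the Bruhat–Chevalley–Renner order. -/
open scoped Classical

/-- The map `ι` sending an `n`-rook `σ` to the `2n`-rook which is `0` on the
first `n` positions and `σ` on the last `n` positions. -/
def iota (n : ℕ) (σ : Fin n → ℕ) : Fin (2 * n) → ℕ :=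
  fun i => if h : n ≤ (i : ℕ) then σ ⟨(i : ℕ) - n, by have := i.isLt; omega⟩ else 0

/-- The longest permutation `w₀`, with `w₀(i) = n+1−i` (0-based: `w₀ i = n − i`). -/
def lastRook (n : ℕ) : Fin n → ℕ := fun i => n - i.val


/-!
Every `n`-rook lies below `w₀`: reading `w₀` from the left, the value `n - k` can be brought
into position `k` (0-based), either by swapping it in from further right or by raising the entry
there, without disturbing the positions already fixed. Every rook lies above `0`, by raising its
entries one at a time.

If `y ≤ f` pointwise for a monotone `f`, the same holds for everything below `y`, since going
down a step only lowers one value or moves a larger value to the right. For `f = ι (fun _ => n)`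
this forces everything below `ι w₀` to vanish on the lower half, i.e. to be some `ι σ`; and the
steps between such rooks are exactly the `ι`-images of steps between `n`-rooks.
-/
variable {n : ℕ}

namespace IsRook

theorem of_forall_eq_or_eq_zero {a b : Fin n → ℕ} (ha : IsRook n a)
    (h : ∀ i, b i = a i ∨ b i = 0) : IsRook n b := by
  refine ⟨fun i => ?_, fun i j hi hij => ?_⟩
  · rcases h i with hb | hb <;> rw [hb]
    exacts [ha.1 i, Nat.zero_le n]
  · have hai : b i = a i := (h i).resolve_right hi
    have haj : b j = a j := (h j).resolve_right (hij ▸ hi)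
    exact ha.2 i j (hai ▸ hi) (by rw [← hai, ← haj, hij])

theorem comp_perm {a : Fin n → ℕ} (ha : IsRook n a) (π : Equiv.Perm (Fin n)) :
    IsRook n (a ∘ π) :=
  ⟨fun i => ha.1 (π i), fun _ _ hi hij => π.injective (ha.2 _ _ hi hij)⟩

theorem update {a : Fin n → ℕ} (ha : IsRook n a) {i : Fin n} {v : ℕ} (hv : v ≤ n)
    (hfresh : ∀ j, j ≠ i → a j ≠ v) : IsRook n (Function.update a i v) := by
  refine ⟨fun j => ?_, fun j k hj hjk => ?_⟩
  · rcases eq_or_ne j i with rfl | hj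
    · simpa using hv
    · simpa [hj] using ha.1 j
  · rcases eq_or_ne j i with rfl | hji <;> rcases eq_or_ne k j with rfl | hkj <;> try rfl
    · simp only [Function.update_self, Function.update_of_ne hkj] at hjk
      exact absurd hjk.symm (hfresh k hkj)
    · rcases eq_or_ne k i with rfl | hki
      · simp only [Function.update_self, Function.update_of_ne hji] at hjk
        exact absurd hjk (hfresh j hji)
      · simp only [Function.update_of_ne hji, Function.update_of_ne hki] at hj hjk
        exact ha.2 j k hj hjk

end IsRook

namespace BCRStep

theorem of_update {a : Fin n → ℕ} {i : Fin n} {v : ℕ} (ha : IsRook n a)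
    (hb : IsRook n (Function.update a i v)) (h : a i < v) :
    BCRStep n a (Function.update a i v) :=
  ⟨ha, hb, .inl ⟨i, by simpa using h, fun j hj => (Function.update_of_ne hj v a).symm⟩⟩

theorem of_swap {a : Fin n → ℕ} {i j : Fin n} (ha : IsRook n a) (hij : i < j) (h : a i < a j) :
    BCRStep n a (a ∘ Equiv.swap i j) := by
  refine ⟨ha, ha.comp_perm _, .inr ⟨i, j, hij, by simp, by simp, by simpa using h, ?_⟩⟩
  intro m hmi hmj
  simp [Equiv.swap_apply_of_ne_of_ne hmi hmj]

theorem le_of_le {m : ℕ} {x y f : Fin m → ℕ} (h : BCRStep m x y) (hf : Monotone f)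
    (hy : y ≤ f) : x ≤ f := by
  obtain ⟨-, -, ⟨i, hlt, heq⟩ | ⟨i, j, hij, h1, h2, h3, heq⟩⟩ := h
  · intro p
    rcases eq_or_ne p i with rfl | hp
    · exact hlt.le.trans (hy p)
    · exact (heq p hp).le.trans (hy p)
  · intro p
    rcases eq_or_ne p i with rfl | hpi
    · exact h2 ▸ h3.le.trans (hy p)
    rcases eq_or_ne p j with rfl | hpj
    · exact h1 ▸ (hy i).trans (hf hij.le)
    · exact (heq p hpi hpj).le.trans (hy p)

end BCRStep

theorem zero_bcrLe {a : Fin n → ℕ} (ha : IsRook n a) : BCRle n (fun _ => 0) a := by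
  have key : ∀ s : Finset (Fin n), BCRle n (fun _ => 0) (s.piecewise a fun _ => 0) := by
    intro s
    induction s using Finset.induction_on with
    | empty => rw [Finset.piecewise_empty]; exact .refl
    | insert j s hj ih =>
      have hrook : ∀ t : Finset (Fin n), IsRook n (t.piecewise a fun _ => 0) := fun t =>
        ha.of_forall_eq_or_eq_zero fun i => by by_cases hi : i ∈ t <;> simp [hi]
      rw [Finset.piecewise_insert]
      rcases Nat.eq_zero_or_pos (a j) with h0 | hpos
      · rwa [h0, Function.update_eq_self_iff.2 (by simp [hj])]
      · refine ih.tail (BCRStep.of_update (hrook s) ?_ (by simpa [hj] using hpos))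
        simpa only [Finset.piecewise_insert] using hrook (insert j s)
  simpa using key Finset.univ

theorem isRook_lastRook (n : ℕ) : IsRook n (lastRook n) :=
  ⟨fun i => Nat.sub_le n i, fun i j hi hij => Fin.ext (by unfold lastRook at hi hij; omega)⟩

theorem IsRook.apply_le_lastRook_of_agree {a : Fin n → ℕ} (ha : IsRook n a) {k : Fin n}
    (hk : ∀ p < k, a p = lastRook n p) : a k ≤ lastRook n k := by
  -- otherwise `a k` is the value `n - p` already taken at the position `p = n - a k < k`
  by_contra! h
  have hak := ha.1 k
  unfold lastRook at h
  have hp : n - a k < k := by omega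
  have hval : a ⟨n - a k, by omega⟩ = a k := by rw [hk _ hp, lastRook]; simp only; omega
  have := ha.2 k ⟨n - a k, by omega⟩ (by omega) hval.symm
  exact absurd (congrArg Fin.val this) (by simp only; omega)

theorem exists_bcrLe_agree_lastRook_le {a : Fin n → ℕ} (ha : IsRook n a) (k : Fin n)
    (hk : ∀ p < k, a p = lastRook n p) :
    ∃ b, IsRook n b ∧ BCRle n a b ∧ ∀ p ≤ k, b p = lastRook n p := by
  have hle := ha.apply_le_lastRook_of_agree hk
  have hpos : 0 < lastRook n k := by unfold lastRook; omega
  by_cases hfound : ∃ j, a j = lastRook n k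
  · obtain ⟨j, hj⟩ := hfound
    rcases eq_or_ne j k with rfl | hjk
    · exact ⟨a, ha, .refl, fun p hp => hp.lt_or_eq.elim (hk p) (· ▸ hj)⟩
    have hkj : k < j := by
      refine lt_of_le_of_ne (not_lt.1 fun hjk' => ?_) hjk.symm
      rw [hk j hjk', lastRook, lastRook] at hj
      have : (j : ℕ) < k := hjk'
      omega
    refine ⟨a ∘ Equiv.swap k j, ha.comp_perm _,
      .single (.of_swap ha hkj (hj ▸ lt_of_le_of_ne hle fun h => hjk (ha.2 j k (by omega)
        (hj.trans h.symm)))), fun p hp => ?_⟩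
    rcases hp.lt_or_eq with hp | rfl
    · rw [Function.comp_apply, Equiv.swap_apply_of_ne_of_ne hp.ne (hp.trans hkj).ne, hk p hp]
    · simpa using hj
  · push Not at hfound
    have hlt : a k < lastRook n k := lt_of_le_of_ne hle (hfound k)
    have hb := ha.update (i := k) (Nat.sub_le n k) fun j _ => hfound j
    refine ⟨_, hb, .single (.of_update ha hb hlt), fun p hp => ?_⟩
    rcases hp.lt_or_eq with hp | rfl
    · rw [Function.update_of_ne hp.ne, hk p hp]
    · simp [lastRook]

theorem bcrLe_lastRook_of_agree {a : Fin n → ℕ} (ha : IsRook n a) (i : ℕ)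
    (hi : ∀ p : Fin n, (p : ℕ) < i → a p = lastRook n p) : BCRle n a (lastRook n) := by
  by_cases hin : i < n
  · obtain ⟨b, hb, hab, hbk⟩ := exists_bcrLe_agree_lastRook_le ha ⟨i, hin⟩ fun p => hi p
    exact hab.trans (bcrLe_lastRook_of_agree hb (i + 1) fun p hp => hbk p (Nat.lt_succ_iff.1 hp))
  · rw [funext fun p => hi p (by omega)]
    exact .refl
termination_by n - i

theorem bcrLe_lastRook {a : Fin n → ℕ} (ha : IsRook n a) : BCRle n a (lastRook n) :=
  bcrLe_lastRook_of_agree ha 0 fun _ h => absurd h (Nat.not_lt_zero _)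

def upperHalf (n : ℕ) (i : Fin n) : Fin (2 * n) := ⟨n + i, by omega⟩

theorem upperHalf_strictMono : StrictMono (upperHalf n) := fun i j h => by
  simp only [upperHalf, Fin.mk_lt_mk]
  exact Nat.add_lt_add_left h n

theorem upperHalf_injective : Function.Injective (upperHalf n) :=
  upperHalf_strictMono.injective

theorem exists_upperHalf_eq {i : Fin (2 * n)} (hi : n ≤ i) : ∃ k, upperHalf n k = i :=
  ⟨⟨i - n, by omega⟩, Fin.ext (by simp only [upperHalf]; omega)⟩

theorem iota_upperHalf (σ : Fin n → ℕ) (i : Fin n) : iota n σ (upperHalf n i) = σ i := by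
  simp [iota, upperHalf]

theorem iota_comp_upperHalf (σ : Fin n → ℕ) : iota n σ ∘ upperHalf n = σ :=
  funext (iota_upperHalf σ)

theorem iota_injective : Function.Injective (iota n) :=
  Function.LeftInverse.injective (g := (· ∘ upperHalf n)) iota_comp_upperHalf

theorem iota_of_lt (σ : Fin n → ℕ) {i : Fin (2 * n)} (hi : (i : ℕ) < n) :
    iota n σ i = 0 := by
  simp [iota, not_le.2 hi]

theorem exists_upperHalf_eq_of_iota_ne_zero {σ : Fin n → ℕ} {i : Fin (2 * n)}
    (h : iota n σ i ≠ 0) : ∃ k, upperHalf n k = i :=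
  exists_upperHalf_eq (not_lt.1 fun hi => h (iota_of_lt σ hi))

theorem iota_apply_eq_of_forall {σ τ : Fin n → ℕ} {i : Fin (2 * n)}
    (h : ∀ k, upperHalf n k = i → σ k = τ k) : iota n σ i = iota n τ i := by
  rcases lt_or_ge (i : ℕ) n with hi | hi
  · rw [iota_of_lt σ hi, iota_of_lt τ hi]
  · obtain ⟨k, rfl⟩ := exists_upperHalf_eq hi
    rw [iota_upperHalf, iota_upperHalf, h k rfl]

theorem iota_mono : Monotone (iota n) := fun σ τ h i => by
  unfold iota
  split_ifs
  exacts [h _, le_rfl]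

theorem monotone_iota_const (c : ℕ) : Monotone (iota n fun _ => c) := fun i j hij => by
  unfold iota
  split_ifs <;> first | exact le_rfl | exact Nat.zero_le c | omega

theorem isRook_iota {σ : Fin n → ℕ} (hσ : IsRook n σ) : IsRook (2 * n) (iota n σ) := by
  refine ⟨fun i => ?_, fun i j hi hij => ?_⟩
  · have : iota n (fun _ => n) i ≤ n := by unfold iota; split_ifs <;> simp
    exact (iota_mono hσ.1 i).trans (this.trans (by omega))
  · obtain ⟨k, rfl⟩ := exists_upperHalf_eq_of_iota_ne_zero hi
    obtain ⟨l, rfl⟩ := exists_upperHalf_eq_of_iota_ne_zero (hij ▸ hi)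
    rw [iota_upperHalf, iota_upperHalf] at hij
    rw [iota_upperHalf] at hi
    rw [hσ.2 k l hi hij]

theorem eq_iota_of_le {x : Fin (2 * n) → ℕ} (hx : x ≤ iota n fun _ => n) :
    x = iota n (x ∘ upperHalf n) := by
  funext i
  rcases lt_or_ge (i : ℕ) n with hi | hi
  · rw [iota_of_lt _ hi]
    simpa [iota_of_lt _ hi] using hx i
  · obtain ⟨k, rfl⟩ := exists_upperHalf_eq hi
    rw [iota_upperHalf, Function.comp_apply]

theorem IsRook.comp_upperHalf {x : Fin (2 * n) → ℕ} (hx : IsRook (2 * n) x)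
    (hle : x ≤ iota n fun _ => n) : IsRook n (x ∘ upperHalf n) :=
  ⟨fun i => (hle (upperHalf n i)).trans_eq (iota_upperHalf _ i),
    fun _ _ hi hij => upperHalf_injective (hx.2 _ _ hi hij)⟩

theorem BCRStep.map_iota {σ τ : Fin n → ℕ} (h : BCRStep n σ τ) :
    BCRStep (2 * n) (iota n σ) (iota n τ) := by
  obtain ⟨hσ, hτ, ⟨k, hlt, heq⟩ | ⟨k, l, hkl, h1, h2, h3, heq⟩⟩ := h
  · refine ⟨isRook_iota hσ, isRook_iota hτ, .inl ⟨upperHalf n k, ?_, fun j hj => ?_⟩⟩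
    · simpa only [iota_upperHalf] using hlt
    · exact iota_apply_eq_of_forall fun m hm => heq m (by rintro rfl; exact hj hm.symm)
  · refine ⟨isRook_iota hσ, isRook_iota hτ,
      .inr ⟨upperHalf n k, upperHalf n l, upperHalf_strictMono hkl, ?_, ?_, ?_,
        fun j hk hl => ?_⟩⟩
    · simpa only [iota_upperHalf] using h1
    · simpa only [iota_upperHalf] using h2
    · simpa only [iota_upperHalf] using h3
    · exact iota_apply_eq_of_forall fun m hm =>
        heq m (by rintro rfl; exact hk hm.symm) (by rintro rfl; exact hl hm.symm)

theorem BCRStep.of_map_iota {σ τ : Fin n → ℕ} (h : BCRStep (2 * n) (iota n σ) (iota n τ))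
    (hσ : IsRook n σ) (hτ : IsRook n τ) : BCRStep n σ τ := by
  obtain ⟨-, -, ⟨i, hlt, heq⟩ | ⟨i, j, hij, h1, h2, h3, heq⟩⟩ := h
  · obtain ⟨k, rfl⟩ := exists_upperHalf_eq_of_iota_ne_zero (σ := τ) (i := i) (by omega)
    refine ⟨hσ, hτ, .inl ⟨k, by simpa only [iota_upperHalf] using hlt, fun l hl => ?_⟩⟩
    simpa only [iota_upperHalf] using heq (upperHalf n l) (upperHalf_injective.ne hl)
  · obtain ⟨k, rfl⟩ := exists_upperHalf_eq_of_iota_ne_zero (σ := τ) (i := i) (by omega)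
    obtain ⟨l, rfl⟩ := exists_upperHalf_eq_of_iota_ne_zero (σ := σ) (i := j) (by omega)
    simp only [iota_upperHalf] at h1 h2 h3
    refine ⟨hσ, hτ,
      .inr ⟨k, l, upperHalf_strictMono.lt_iff_lt.1 hij, h1, h2, h3, fun m hk hl => ?_⟩⟩
    simpa only [iota_upperHalf] using
      heq (upperHalf n m) (upperHalf_injective.ne hk) (upperHalf_injective.ne hl)

theorem BCRle.exists_iota {x : Fin (2 * n) → ℕ} {τ : Fin n → ℕ}
    (h : BCRle (2 * n) x (iota n τ)) (hτ : IsRook n τ) :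
    ∃ σ, IsRook n σ ∧ x = iota n σ ∧ BCRle n σ τ := by
  induction h using Relation.ReflTransGen.head_induction_on with
  | refl => exact ⟨τ, hτ, rfl, .refl⟩
  | head hxy _ ih =>
    obtain ⟨σ', hσ', rfl, hσ'τ⟩ := ih
    have hbound := hxy.le_of_le (monotone_iota_const n) (iota_mono hσ'.1)
    have hσ := hxy.1.comp_upperHalf hbound
    rw [eq_iota_of_le hbound] at hxy ⊢
    exact ⟨_, hσ, rfl, .head (hxy.of_map_iota hσ hσ') hσ'τ⟩

theorem bcrLe_iota_iff {σ τ : Fin n → ℕ} (hτ : IsRook n τ) :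
    BCRle (2 * n) (iota n σ) (iota n τ) ↔ BCRle n σ τ := by
  refine ⟨fun h => ?_, Relation.ReflTransGen.lift (iota n) (fun _ _ => BCRStep.map_iota) _ _⟩
  obtain ⟨σ', -, hσσ', hσ'τ⟩ := h.exists_iota hτ
  rwa [iota_injective hσσ']

theorem bcrLe_iota_lastRook_iff (x : Fin (2 * n) → ℕ) :
    BCRle (2 * n) x (iota n (lastRook n)) ↔ ∃ σ, IsRook n σ ∧ x = iota n σ := by
  refine ⟨fun h => ?_, ?_⟩
  · obtain ⟨σ, hσ, rfl, -⟩ := h.exists_iota (isRook_lastRook n)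
    exact ⟨σ, hσ, rfl⟩
  · rintro ⟨σ, hσ, rfl⟩
    exact (bcrLe_iota_iff (isRook_lastRook n)).2 (bcrLe_lastRook hσ)

def lowerIntervalEquiv (n : ℕ) :
    {x : Fin (2 * n) → ℕ // IsRook (2 * n) x ∧
      BCRle (2 * n) (fun _ => 0) x ∧ BCRle (2 * n) x (iota n (lastRook n))} ≃
    {σ : Fin n → ℕ // IsRook n σ} where
  toFun x := ⟨x.1 ∘ upperHalf n, by
    obtain ⟨σ, hσ, hx⟩ := (bcrLe_iota_lastRook_iff x.1).1 x.2.2.2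
    rwa [hx, iota_comp_upperHalf]⟩
  invFun σ := ⟨iota n σ.1, isRook_iota σ.2, zero_bcrLe (isRook_iota σ.2),
    (bcrLe_iota_lastRook_iff _).2 ⟨σ.1, σ.2, rfl⟩⟩
  left_inv x := Subtype.ext <| by
    obtain ⟨σ, -, hx⟩ := (bcrLe_iota_lastRook_iff x.1).1 x.2.2.2
    simp only [hx, iota_comp_upperHalf]
  right_inv σ := Subtype.ext (iota_comp_upperHalf σ.1)

theorem lowerIntervalEquiv_bcrLe_iff (a b) :
    BCRle (2 * n) a.1 b.1 ↔ BCRle n (lowerIntervalEquiv n a).1 (lowerIntervalEquiv n b).1 := by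
  obtain ⟨σ, -, ha⟩ := (bcrLe_iota_lastRook_iff a.1).1 a.2.2.2
  obtain ⟨τ, hτ, hb⟩ := (bcrLe_iota_lastRook_iff b.1).1 b.2.2.2
  simp only [lowerIntervalEquiv, Equiv.coe_fn_mk, ha, hb, iota_comp_upperHalf]
  exact bcrLe_iota_iff hτ

/-- a `2n`-rook `x` satisfies `x ≤ ι(w₀)` iff `x = ι(σ)` for some
`n`-rook `σ`; consequently the lower interval `[0, ι(w₀)]` in the poset of
`2n`-rooks is order-isomorphic to the poset of all `n`-rooks under the
Bruhat–Chevalley–Renner order. -/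
theorem stmt13 (n : ℕ) :
    (∀ x : Fin (2 * n) → ℕ, IsRook (2 * n) x →
      (BCRle (2 * n) x (iota n (lastRook n)) ↔
        ∃ σ : Fin n → ℕ, IsRook n σ ∧ x = iota n σ)) ∧
    ∃ F : {x : Fin (2 * n) → ℕ // IsRook (2 * n) x ∧
            BCRle (2 * n) (fun _ => 0) x ∧ BCRle (2 * n) x (iota n (lastRook n))}
          ≃ {σ : Fin n → ℕ // IsRook n σ},
      ∀ a b, BCRle (2 * n) a.val b.val ↔ BCRle n (F a).val (F b).val :=
  ⟨fun x _ => bcrLe_iota_lastRook_iff x, lowerIntervalEquiv n, lowerIntervalEquiv_bcrLe_iff⟩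
end
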